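/- arXiv:2001.07368 — 2 statements merged into one kernel-verified Lean document; each statement's English description precedes it below -/
import Mathlib

section
/- For every real p ≥ 2 there exist a < 0 and τ₀ > 0 such that for every τ > τ₀ the function Z(s) = (1/p')^{p−1} · (1 − 1/(1 + ln τ − s) + a/(1 + ln τ − s)²), defined for s ∈ (−∞, 0), satisfies: Z is continuously differentiable on (−∞,0); Z(s) > 0 and Z'(s) < 0 for all s < 0; Z(s) → (1/p')^{p−1} as s → −∞; and −Z'(s) + (p−1)·Z(s) − (p−1)·Z(s)^{p'} ≥ (1/p')^p · (1 + (p/(2(p−1))) · (1 + ln τ − s)^{−2}) for all s < 0. -/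
open Real Set Filter Topology

/-!
Take `a = -6`, `τ₀ = exp 26`, and write `q = p'`, `t = 1 + log τ - s > 27`, `x = 1 / t ≤ 1 / 27`,
so that `Z = logProfile c (1 + log τ) (-6) = c (1 - x - 6 x²)` with `c = (1/q)^(p-1)`
and `-Z' = c (x² + 12 x³)`.
Since `c = q (1/q)^p`, `c^q = (1/q)^p` and `(p - 1)(q - 1) = 1`, dividing the differential
inequality by `(1/q)^p` leaves `1 + q x²/2 ≤ q (x² + 12 x³) + (q w - w^q)/(q - 1)` with
`w = 1 - δ`, `δ = x + 6 x²`. Integrating `(1 - y)^(q-2) ≤ (1 - y)⁻¹ ≤ 1 + 2y` twice gives the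
Taylor bound `(1 - δ)^q ≤ 1 - q δ + q (q - 1) (δ²/2 + δ³/3)` on `[0, 1/2]`; it turns the right
side into `1 + q x²/2 + q (6 x³ - 18 x⁴ - δ³/3)`, and the bracket is positive for `x ≤ 1/27`.
-/

section OneSubRpow

variable {x : ℝ}

lemma hasDerivAt_one_sub_rpow (r : ℝ) {y : ℝ} (hy : y < 1) :
    HasDerivAt (fun y => (1 - y) ^ r) (-(r * (1 - y) ^ (r - 1))) y := by
  refine (((hasDerivAt_id' y).const_sub 1).rpow_const (p := r) (Or.inl ?_)).congr_deriv ?_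
  · linarith
  · ring

lemma one_sub_rpow_le_one_add_two_mul {s : ℝ} (hs : -1 ≤ s) (hx0 : 0 ≤ x) (hx : x ≤ 1 / 2) :
    (1 - x) ^ s ≤ 1 + 2 * x := by
  have hpos : 0 < 1 - x := by linarith
  calc (1 - x) ^ s ≤ (1 - x) ^ (-1 : ℝ) := rpow_le_rpow_of_exponent_ge hpos (by linarith) hs
    _ = (1 - x)⁻¹ := rpow_neg_one _
    _ ≤ 1 + 2 * x := by
      rw [inv_le_iff_one_le_mul₀ hpos]; nlinarith

lemma one_sub_mul_le_one_sub_rpow {r : ℝ} (hr : 0 ≤ r) (hx0 : 0 ≤ x) (hx : x ≤ 1 / 2) :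
    1 - r * (x + x ^ 2) ≤ (1 - x) ^ r := by
  have hder : ∀ y ∈ Icc (0 : ℝ) (1 / 2),
      HasDerivAt (fun y => (1 - y) ^ r) (-(r * (1 - y) ^ (r - 1))) y :=
    fun y hy => hasDerivAt_one_sub_rpow r (by linarith [hy.2])
  refine image_le_of_deriv_right_le_deriv_boundary (f := fun y => 1 - r * (y + y ^ 2))
    (f' := fun y => -(r * (1 + 2 * y)))
    (by fun_prop) (fun y _ => ?_) (by simp)
    (fun y hy => (hder y hy).continuousAt.continuousWithinAt)
    (fun y hy => (hder y (Ico_subset_Icc_self hy)).hasDerivWithinAt) (fun y hy => ?_) ⟨hx0, hx⟩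
  · refine ((((hasDerivAt_id' y).add ((hasDerivAt_id' y).pow 2)).const_mul r).const_sub 1
      |>.hasDerivWithinAt).congr_deriv ?_
    push_cast; ring
  · have := one_sub_rpow_le_one_add_two_mul (s := r - 1) (by linarith) hy.1 hy.2.le
    nlinarith

lemma one_sub_rpow_le_taylor {q : ℝ} (hq : 1 ≤ q) (hx0 : 0 ≤ x) (hx : x ≤ 1 / 2) :
    (1 - x) ^ q ≤ 1 - q * x + q * (q - 1) * (x ^ 2 / 2 + x ^ 3 / 3) := by
  have hder : ∀ y ∈ Icc (0 : ℝ) (1 / 2),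
      HasDerivAt (fun y => (1 - y) ^ q) (-(q * (1 - y) ^ (q - 1))) y :=
    fun y hy => hasDerivAt_one_sub_rpow q (by linarith [hy.2])
  refine image_le_of_deriv_right_le_deriv_boundary
    (fun y hy => (hder y hy).continuousAt.continuousWithinAt)
    (fun y hy => (hder y (Ico_subset_Icc_self hy)).hasDerivWithinAt) (by simp)
    (B := fun y => 1 - q * y + q * (q - 1) * (y ^ 2 / 2 + y ^ 3 / 3))
    (B' := fun y => -q + q * (q - 1) * (y + y ^ 2)) (by fun_prop) (fun y _ => ?_)
    (fun y hy => ?_) ⟨hx0, hx⟩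
  · refine ((((hasDerivAt_id' y).const_mul q).const_sub 1).add
      ((((hasDerivAt_id' y).pow 2).div_const 2).add (((hasDerivAt_id' y).pow 3).div_const 3)
        |>.const_mul (q * (q - 1))) |>.hasDerivWithinAt).congr_deriv ?_
    push_cast; ring
  · have := one_sub_mul_le_one_sub_rpow (r := q - 1) (by linarith) hy.1 hy.2.le
    nlinarith

end OneSubRpow

noncomputable def logProfile (c L a s : ℝ) : ℝ := c * (1 - 1 / (L - s) + a / (L - s) ^ 2)

section LogProfile

variable {c L a s : ℝ}

lemma hasDerivAt_logProfile (hs : s ≠ L) :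
    HasDerivAt (logProfile c L a) (-(c * (1 / (L - s) ^ 2 - 2 * a / (L - s) ^ 3))) s := by
  have hne : L - s ≠ 0 := sub_ne_zero.mpr hs.symm
  have hLs : HasDerivAt (fun s => L - s) (-1) s := (hasDerivAt_id' s).const_sub L
  refine ((((hasDerivAt_const s 1).sub ((hasDerivAt_const s 1).div hLs hne)).add
    ((hasDerivAt_const s a).div (hLs.pow 2) (pow_ne_zero 2 hne))).const_mul c).congr_deriv ?_
  simp only [Pi.pow_apply]
  field_simp
  ring

lemma contDiffOn_logProfile {n : WithTop ℕ∞} : ContDiffOn ℝ n (logProfile c L a) (Iio L) := by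
  have hne : ∀ s ∈ Iio L, L - s ≠ 0 := fun s hs => sub_ne_zero.mpr (ne_of_gt hs)
  unfold logProfile
  fun_prop (disch := first | exact hne | exact fun s hs => pow_ne_zero 2 (hne s hs))

lemma tendsto_logProfile_atBot : Tendsto (logProfile c L a) atBot (𝓝 c) := by
  have hx : Tendsto (fun s => 1 / (L - s)) atBot (𝓝 0) := by
    have hLs : Tendsto (fun s => L - s) atBot atTop := by
      simpa only [sub_eq_add_neg] using tendsto_atTop_add_const_left atBot L tendsto_neg_atBot_atTop
    exact (tendsto_inv_atTop_zero.comp hLs).congr fun s => (one_div _).symm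
  have hpoly : Tendsto (fun x : ℝ => c * (1 - x + a * x ^ 2)) (𝓝 0) (𝓝 c) :=
    (by fun_prop : Continuous fun x : ℝ => c * (1 - x + a * x ^ 2)).tendsto' 0 c (by simp)
  refine (hpoly.comp hx).congr fun s => ?_
  simp only [logProfile, Function.comp_apply, div_eq_mul_inv, one_mul, inv_pow]

lemma deriv_logProfile_neg (hc : 0 < c) (ha : a ≤ 0) (hs : s < L) :
    deriv (logProfile c L a) s < 0 := by
  have ht : 0 < L - s := sub_pos.mpr hs
  rw [(hasDerivAt_logProfile hs.ne).deriv, neg_lt_zero]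
  have h1 : 0 < 1 / (L - s) ^ 2 := by positivity
  have h2 : 0 ≤ -a / (L - s) ^ 3 := div_nonneg (neg_nonneg.mpr ha) (by positivity)
  have h3 : 2 * a / (L - s) ^ 3 = -2 * (-a / (L - s) ^ 3) := by ring
  exact mul_pos hc (by linarith)

lemma logProfile_pos (hc : 0 < c) (hs : 27 ≤ L - s) : 0 < logProfile c L (-6) s := by
  have hx : 1 / (L - s) ≤ 1 / 27 := one_div_le_one_div_of_le (by norm_num) hs
  have hx0 : 0 ≤ 1 / (L - s) := by positivity
  have : logProfile c L (-6) s = c * (1 - 1 / (L - s) - 6 * (1 / (L - s)) ^ 2) := by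
    simp only [logProfile, div_eq_mul_inv, one_mul, inv_pow]; ring
  rw [this]
  exact mul_pos hc (by nlinarith)

lemma logProfile_ode_ineq_normalized {q x : ℝ} (hq : 1 < q) (hx0 : 0 ≤ x) (hx : x ≤ 1 / 27) :
    1 + q / 2 * x ^ 2 ≤
      q * (x ^ 2 + 12 * x ^ 3) + (q * (1 - x - 6 * x ^ 2) - (1 - x - 6 * x ^ 2) ^ q) / (q - 1) := by
  set δ := x + 6 * x ^ 2 with hδ
  have hδ0 : 0 ≤ δ := by positivity
  have hδ2 : δ ≤ 1 / 2 := by nlinarith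
  have hw : 1 - x - 6 * x ^ 2 = 1 - δ := by ring
  have hdefect : 1 - q * (δ ^ 2 / 2 + δ ^ 3 / 3) ≤ (q * (1 - δ) - (1 - δ) ^ q) / (q - 1) := by
    rw [le_div_iff₀ (by linarith)]
    nlinarith [one_sub_rpow_le_taylor hq.le hδ0 hδ2]
  have hcubic : δ ^ 2 / 2 + δ ^ 3 / 3 ≤ x ^ 2 / 2 + 12 * x ^ 3 := by
    have h3 : 0 ≤ x ^ 3 := by positivity
    rw [hδ]
    nlinarith [mul_le_mul_of_nonneg_left hx h3, mul_le_mul_of_nonneg_left hx (mul_nonneg h3 hx0)]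
  rw [hw]
  nlinarith [mul_le_mul_of_nonneg_left hcubic (by linarith : (0:ℝ) ≤ q)]

lemma logProfile_ode_ineq {p q : ℝ} (h : p.HolderConjugate q) (hs : 27 ≤ L - s) :
    (1 / q) ^ p * (1 + p / (2 * (p - 1)) * (1 / (L - s) ^ 2)) ≤
      -deriv (logProfile ((1 / q) ^ (p - 1)) L (-6)) s
        + (p - 1) * logProfile ((1 / q) ^ (p - 1)) L (-6) s
        - (p - 1) * logProfile ((1 / q) ^ (p - 1)) L (-6) s ^ q := by
  have hZ : logProfile ((1 / q) ^ (p - 1)) L (-6) s =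
      (1 / q) ^ (p - 1) * (1 - 1 / (L - s) - 6 * (1 / (L - s)) ^ 2) := by
    simp only [logProfile, div_eq_mul_inv, one_mul, inv_pow]; ring
  have hZ' : deriv (logProfile ((1 / q) ^ (p - 1)) L (-6)) s =
      -((1 / q) ^ (p - 1) * ((1 / (L - s)) ^ 2 + 12 * (1 / (L - s)) ^ 3)) := by
    rw [(hasDerivAt_logProfile (by linarith)).deriv]
    simp only [div_eq_mul_inv, one_mul, inv_pow]; ring
  have hb : 0 < 1 / q := one_div_pos.mpr h.symm.pos
  have hc : (1 / q) ^ (p - 1) = q * (1 / q) ^ p := by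
    rw [rpow_sub hb, rpow_one]; field_simp
  set x := 1 / (L - s) with hx
  set w := 1 - x - 6 * x ^ 2
  set C := (1 / q) ^ p
  have hx0 : 0 ≤ x := by positivity
  have hx27 : x ≤ 1 / 27 := one_div_le_one_div_of_le (by norm_num) hs
  have hw : 0 ≤ w := by nlinarith
  have hcq : ((1 / q) ^ (p - 1)) ^ q = C := by
    rw [← rpow_mul hb.le, h.sub_one_mul_conj]
  have hp : p - 1 = (q - 1)⁻¹ := eq_inv_of_mul_eq_one_left (by linear_combination h.mul_eq_add)
  have hhalf : p / (2 * (p - 1)) = q / 2 := by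
    rw [h.conjugate_eq]; field_simp
  rw [hZ', hZ, mul_rpow (by positivity) hw, hcq, hhalf, ← one_div_pow, ← hx]
  calc C * (1 + q / 2 * x ^ 2)
      ≤ C * (q * (x ^ 2 + 12 * x ^ 3) + (q * w - w ^ q) / (q - 1)) :=
        mul_le_mul_of_nonneg_left (logProfile_ode_ineq_normalized h.symm.lt hx0 hx27)
          (by positivity)
    _ = _ := by
      rw [hc, hp]
      ring

end LogProfile

/-- Lemma 5.1 (9lem2): existence of the comparison function Z with an
additional logarithmic term. -/
theorem log_comparison_lemma (p : ℝ) (hp : 2 ≤ p) :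
    ∃ a : ℝ, a < 0 ∧ ∃ τ₀ : ℝ, 0 < τ₀ ∧
      ∀ τ : ℝ, τ₀ < τ →
        ∀ Z : ℝ → ℝ,
          (∀ s : ℝ, Z s = (1 / (p / (p - 1))) ^ (p - 1) *
              (1 - 1 / (1 + Real.log τ - s) + a / (1 + Real.log τ - s) ^ 2)) →
          ContDiffOn ℝ 1 Z (Set.Iio (0 : ℝ)) ∧
          (∀ s < (0 : ℝ), 0 < Z s) ∧
          (∀ s < (0 : ℝ), deriv Z s < 0) ∧
          Filter.Tendsto Z Filter.atBot (nhds ((1 / (p / (p - 1))) ^ (p - 1))) ∧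
          (∀ s < (0 : ℝ),
            (1 / (p / (p - 1))) ^ p *
                (1 + p / (2 * (p - 1)) * (1 / (1 + Real.log τ - s) ^ 2))
              ≤ -(deriv Z s) + (p - 1) * Z s - (p - 1) * Z s ^ (p / (p - 1))) := by
  have h : p.HolderConjugate (p / (p - 1)) :=
    (holderConjugate_iff_eq_conjExponent (by linarith)).mpr rfl
  refine ⟨-6, by norm_num, exp 26, exp_pos 26, fun τ hτ Z hZ => ?_⟩
  have hL : 27 < 1 + log τ := by
    linarith [(lt_log_iff_exp_lt ((exp_pos 26).trans hτ)).mpr hτ]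
  obtain rfl : Z = logProfile ((1 / (p / (p - 1))) ^ (p - 1)) (1 + log τ) (-6) := funext hZ
  have hc : 0 < (1 / (p / (p - 1))) ^ (p - 1) := rpow_pos_of_pos (one_div_pos.mpr h.symm.pos) _
  exact ⟨contDiffOn_logProfile.mono (Iio_subset_Iio (by linarith)),
    fun s _ => logProfile_pos hc (by linarith),
    fun s _ => deriv_logProfile_neg hc (by norm_num) (by linarith),
    tendsto_logProfile_atBot,
    fun s _ => logProfile_ode_ineq h (by linarith)⟩
end

section
/- Let p > 1, n ≥ 2 and δ with 1 < δ < n and δ ≠ p. Then for all real r, R with 0 < r < R: |(p−δ)/p|^p · r^{(1−δ)p/(p−1)} · |R^{(p−δ)/(p−1)} − r^{(p−δ)/(p−1)}|^{−p} ≥ ((p−1)/p)^p · (R − r)^{−p}. -/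
open Real

/-!
Put `α = (p - δ)/(p - 1)`, so that `α ≤ 1`, `α ≠ 0` and `(1 - δ) p/(p - 1) = (α - 1) p`.
Since `|d/dx x^α| = |α| x^(α-1)` is nonincreasing, the mean value inequality gives
`|R^α - r^α| ≤ |α| r^(α-1) (R - r)`; raising this to the power `-p` and using
`|(p - δ)/p| = |α| (p - 1)/p`, every factor `|α|` and every power of `r` cancels.
-/

lemma abs_rpow_sub_rpow_le {α r R : ℝ} (hr : 0 < r) (hrR : r ≤ R) (hα : α ≤ 1) :
    |R ^ α - r ^ α| ≤ |α| * r ^ (α - 1) * (R - r) := by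
  refine norm_image_sub_le_of_norm_deriv_le_segment' (f := fun x : ℝ => x ^ α)
    (fun x hx => (hasDerivAt_rpow_const (Or.inl (hr.trans_le hx.1).ne')).hasDerivWithinAt)
    (fun x hx => ?_) R ⟨hrR, le_rfl⟩
  have hx0 : 0 < x := hr.trans_le hx.1
  rw [Real.norm_eq_abs, abs_mul, abs_of_pos (rpow_pos_of_pos hx0 _)]
  exact mul_le_mul_of_nonneg_left (rpow_le_rpow_of_nonpos hr hx.1 (sub_nonpos.2 hα))
    (abs_nonneg α)

lemma rpow_sub_rpow_ne_zero {α r R : ℝ} (hr : 0 ≤ r) (hrR : r < R) (hα : α ≠ 0) :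
    R ^ α - r ^ α ≠ 0 :=
  sub_ne_zero.2 fun h => hrR.ne' ((rpow_left_inj (hr.trans hrR.le) hr hα).1 h)

theorem weight_comparison_general
    (p : ℝ) (hp : 1 < p)
    (δ : ℝ) (hδ1 : 1 < δ) (hδp : δ ≠ p)
    (r R : ℝ) (hr : 0 < r) (hrR : r < R) :
    ((p - 1) / p) ^ p * (R - r) ^ (-p)
      ≤ |(p - δ) / p| ^ p * r ^ ((1 - δ) * p / (p - 1)) *
          |R ^ ((p - δ) / (p - 1)) - r ^ ((p - δ) / (p - 1))| ^ (-p) := by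
  set α := (p - δ) / (p - 1) with hα
  have hp1 : 0 < p - 1 := sub_pos.2 hp
  have hα0 : α ≠ 0 := div_ne_zero (sub_ne_zero.2 hδp.symm) hp1.ne'
  have hα1 : α ≤ 1 := by rw [div_le_one hp1]; linarith
  have hcoef : |(p - δ) / p| = |α| * ((p - 1) / p) := by
    rw [← abs_of_pos (div_pos hp1 (by linarith : (0 : ℝ) < p)), ← abs_mul, hα]
    field_simp
  have hexp : (1 - δ) * p / (p - 1) = (α - 1) * p := by
    rw [hα]; field_simp; ring
  have hαpos : 0 < |α| := abs_pos.2 hα0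
  have hrpos : 0 < r ^ (α - 1) := rpow_pos_of_pos hr _
  calc ((p - 1) / p) ^ p * (R - r) ^ (-p)
      = (|α| * ((p - 1) / p)) ^ p * (r ^ (α - 1)) ^ p *
          (|α| * r ^ (α - 1) * (R - r)) ^ (-p) := by
        have : 0 < |α| ^ p := rpow_pos_of_pos hαpos p
        have : 0 < (r ^ (α - 1)) ^ p := rpow_pos_of_pos hrpos p
        have hRr : 0 ≤ R - r := by linarith
        rw [rpow_neg hRr, rpow_neg (by positivity), mul_rpow hαpos.le (by positivity),
          mul_rpow (by positivity) hRr, mul_rpow hαpos.le hrpos.le]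
        field_simp
    _ ≤ |(p - δ) / p| ^ p * r ^ ((1 - δ) * p / (p - 1)) * |R ^ α - r ^ α| ^ (-p) := by
        rw [hcoef, hexp, rpow_mul hr.le]
        refine mul_le_mul_of_nonneg_left ?_ (by positivity)
        exact rpow_le_rpow_of_nonpos (abs_pos.2 (rpow_sub_rpow_ne_zero hr.le hrR hα0))
          (abs_rpow_sub_rpow_le hr hrR.le hα1) (by linarith)

/-- Pointwise comparison of the doubly singular Hardy weight with the
distance-to-the-boundary weight (Proposition 3.6 (i), inequality (10eq15-2)). -/
theorem weight_comparison
    (p : ℝ) (hp : 1 < p)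
    {n : ℕ} (hn : 2 ≤ n)
    (δ : ℝ) (hδ1 : 1 < δ) (hδn : δ < n) (hδp : δ ≠ p)
    (r R : ℝ) (hr : 0 < r) (hrR : r < R) :
    ((p - 1) / p) ^ p * (R - r) ^ (-p)
      ≤ |(p - δ) / p| ^ p * r ^ ((1 - δ) * p / (p - 1)) *
          |R ^ ((p - δ) / (p - 1)) - r ^ ((p - δ) / (p - 1))| ^ (-p) :=
  weight_comparison_general p hp δ hδ1 hδp r R hr hrR
end
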